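/- Let √2 ≤ r ≤ 2 and define g(θ) = Leb¹({ℓ ∈ [0,r]∩[0,2] : (1−ℓ²/4)(2−2cos θ) ≤ ℓ²}) for θ ∈ [0,π]. Then g is non-increasing on [0,π], and for every θ₀ ∈ [0,π], π · ∫₀^{θ₀} g(θ) dθ ≥ θ₀ · ∫₀^{π} g(θ) dθ. (Equivalently, the marginal measure ν_I with density proportional to g is stochastically dominated by the uniform boundary measure ν_B on [0,π].) -/
import Mathlib


open Real MeasureTheory

/-- `gSlice r θ` is the 1-dimensional Lebesgue measure of the vertical slice
of the region `M^{+,ℓ}_{4,r}` over `θ`, i.e. the density of the marginal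
measure `ν_I` on the boundary `∂M^{+,ℓ}_{4,r}`. -/
noncomputable def gSlice (r θ : ℝ) : ℝ :=
  (volume {ℓ : ℝ | ℓ ∈ Set.Icc 0 r ∩ Set.Icc 0 2 ∧
    (1 - ℓ ^ 2 / 4) * (2 - 2 * Real.cos θ) ≤ ℓ ^ 2}).toReal

noncomputable def tFun (θ : ℝ) : ℝ :=
  Real.sqrt ((8 - 8 * Real.cos θ) / (6 - 2 * Real.cos θ))

lemma tFun_le_sqrt_two (θ : ℝ) : tFun θ ≤ Real.sqrt 2 := by
  have hc1 : Real.cos θ ≤ 1 := Real.cos_le_one θ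
  have hc2 : -1 ≤ Real.cos θ := Real.neg_one_le_cos θ
  apply Real.sqrt_le_sqrt
  rw [div_le_iff₀ (by linarith)]
  nlinarith

lemma gSlice_eq (r : ℝ) (h1 : Real.sqrt 2 ≤ r) (h2 : r ≤ 2) (θ : ℝ) :
    gSlice r θ = r - tFun θ := by
  have hc1 : Real.cos θ ≤ 1 := Real.cos_le_one θ
  have hc2 : -1 ≤ Real.cos θ := Real.neg_one_le_cos θ
  have hden : (0:ℝ) < 6 - 2 * Real.cos θ := by linarith
  have hq : (0:ℝ) ≤ (8 - 8 * Real.cos θ) / (6 - 2 * Real.cos θ) :=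
    div_nonneg (by linarith) hden.le
  have htr : tFun θ ≤ r := le_trans (tFun_le_sqrt_two θ) h1
  have hset : {ℓ : ℝ | ℓ ∈ Set.Icc 0 r ∩ Set.Icc 0 2 ∧
      (1 - ℓ ^ 2 / 4) * (2 - 2 * Real.cos θ) ≤ ℓ ^ 2} = Set.Icc (tFun θ) r := by
    ext ℓ
    simp only [Set.mem_setOf_eq, Set.mem_inter_iff, Set.mem_Icc]
    constructor
    · rintro ⟨⟨⟨hl0, hlr⟩, _⟩, hineq⟩
      refine ⟨?_, hlr⟩
      have hq2 : (8 - 8 * Real.cos θ) / (6 - 2 * Real.cos θ) ≤ ℓ ^ 2 := by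
        rw [div_le_iff₀ hden]
        nlinarith
      calc tFun θ ≤ Real.sqrt (ℓ ^ 2) := Real.sqrt_le_sqrt hq2
        _ = ℓ := by rw [Real.sqrt_sq hl0]
    · rintro ⟨hlo, hhi⟩
      have hl0 : 0 ≤ ℓ := le_trans (Real.sqrt_nonneg _) hlo
      have hq2 : (8 - 8 * Real.cos θ) / (6 - 2 * Real.cos θ) ≤ ℓ ^ 2 := by
        have h := pow_le_pow_left₀ (Real.sqrt_nonneg _) hlo 2
        rwa [Real.sq_sqrt hq] at h
      rw [div_le_iff₀ hden] at hq2
      exact ⟨⟨⟨hl0, hhi⟩, ⟨hl0, le_trans hhi h2⟩⟩, by nlinarith⟩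
  rw [gSlice, hset, Real.volume_Icc, ENNReal.toReal_ofReal (by linarith)]

lemma tFun_mono : MonotoneOn tFun (Set.Icc 0 Real.pi) := by
  intro a ha b hb hab
  have hca : Real.cos a ≤ 1 := Real.cos_le_one a
  have hcb1 : -1 ≤ Real.cos b := Real.neg_one_le_cos b
  have hcb : Real.cos b ≤ 1 := Real.cos_le_one b
  have hca1 : -1 ≤ Real.cos a := Real.neg_one_le_cos a
  have hcc : Real.cos b ≤ Real.cos a :=
    Real.cos_le_cos_of_nonneg_of_le_pi ha.1 hb.2 hab
  apply Real.sqrt_le_sqrt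
  rw [div_le_div_iff₀ (by linarith) (by linarith)]
  nlinarith

lemma key_ineq (f : ℝ → ℝ) (hf : AntitoneOn f (Set.Icc 0 Real.pi))
    (a : ℝ) (ha : a ∈ Set.Icc (0:ℝ) Real.pi) :
    a * ∫ θ in (0:ℝ)..Real.pi, f θ ≤ Real.pi * ∫ θ in (0:ℝ)..a, f θ := by
  obtain ⟨ha0, haπ⟩ := ha
  have hsub1 : Set.Icc (0:ℝ) a ⊆ Set.Icc 0 Real.pi :=
    Set.Icc_subset_Icc le_rfl haπ
  have hsub2 : Set.Icc a Real.pi ⊆ Set.Icc 0 Real.pi :=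
    Set.Icc_subset_Icc ha0 le_rfl
  have hint1 : IntervalIntegrable f volume 0 a := by
    apply AntitoneOn.intervalIntegrable
    rw [Set.uIcc_of_le ha0]; exact hf.mono hsub1
  have hint2 : IntervalIntegrable f volume a Real.pi := by
    apply AntitoneOn.intervalIntegrable
    rw [Set.uIcc_of_le haπ]; exact hf.mono hsub2
  have hmem_a : a ∈ Set.Icc (0:ℝ) Real.pi := ⟨ha0, haπ⟩
  have hI1 : a * f a ≤ ∫ θ in (0:ℝ)..a, f θ := by
    have : ∫ _ in (0:ℝ)..a, f a ≤ ∫ θ in (0:ℝ)..a, f θ := by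
      apply intervalIntegral.integral_mono_on ha0 (intervalIntegrable_const) hint1
      intro x hx
      exact hf (hsub1 hx) hmem_a hx.2
    simpa using this
  have hI2 : (∫ θ in a..Real.pi, f θ) ≤ (Real.pi - a) * f a := by
    have : ∫ θ in a..Real.pi, f θ ≤ ∫ _ in a..Real.pi, f a := by
      apply intervalIntegral.integral_mono_on haπ hint2 (intervalIntegrable_const)
      intro x hx
      exact hf hmem_a (hsub2 hx) hx.1
    simpa using this
  have hsplit : (∫ θ in (0:ℝ)..Real.pi, f θ) =
      (∫ θ in (0:ℝ)..a, f θ) + ∫ θ in a..Real.pi, f θ :=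
    (intervalIntegral.integral_add_adjacent_intervals hint1 hint2).symm
  rw [hsplit]
  nlinarith [mul_le_mul_of_nonneg_left hI2 ha0,
    mul_le_mul_of_nonneg_left hI1 (sub_nonneg.mpr haπ)]

/-- For `√2 ≤ r ≤ 2`, the slice-measure function `g` is non-increasing on
`[0,π]`, and the marginal measure `ν_I` with density proportional to `g` is
stochastically dominated by the uniform boundary measure `ν_B` on `[0,π]`:
for every `θ₀ ∈ [0,π]`, `π · ∫₀^{θ₀} g ≥ θ₀ · ∫₀^{π} g`. -/
theorem gSlice_antitone_and_stochastic (r : ℝ) (h1 : Real.sqrt 2 ≤ r)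
    (h2 : r ≤ 2) :
    AntitoneOn (gSlice r) (Set.Icc 0 Real.pi) ∧
    ∀ θ₀ ∈ Set.Icc (0 : ℝ) Real.pi,
      θ₀ * ∫ θ in (0 : ℝ)..Real.pi, gSlice r θ ≤
        Real.pi * ∫ θ in (0 : ℝ)..θ₀, gSlice r θ := by
  have hanti : AntitoneOn (gSlice r) (Set.Icc 0 Real.pi) := by
    intro a ha b hb hab
    rw [gSlice_eq r h1 h2, gSlice_eq r h1 h2]
    have := tFun_mono ha hb hab
    linarith
  exact ⟨hanti, fun θ₀ hθ₀ => key_ineq (gSlice r) hanti θ₀ hθ₀⟩
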